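/- dim HL^2(F_n^1, V) = 4k, with cohomology classes represented by the cocycles θ_{1,j}(e_2,e_1)=x_j, θ_{2,j}(e_n,e_1)=x_j, θ_{3,j}(e_1,e_2)=x_j, θ_{4,j}(e_2,e_2)=x_j for 1 ≤ j ≤ k. -/

import Mathlib

/-!
Indices are 0-based: `e ⟨i, _⟩` is the paper's `e_{i+1}`.

Every product is a right multiplication by `e₁`: `[x, y] = y₁ [x, e₁]`, and `x ↦ [x, e₁]` maps
onto the derived algebra `D = span(e₃, …, e_n) = {w | w₁ = w₂ = 0}` with kernel spanned by
`e₁ - e₂` and `e_n`. Taking `z = e₁` in the cocycle identity and inducting along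
`e_{i+1} = [e_i, e₁]` shows that a cocycle `θ` vanishes on `L × D` and on `D × e₂`, so it is
determined by the form `θ(·, e₁)` and the values `θ(e₁, e₂)`, `θ(e₂, e₂)`. Splitting `x` along
that kernel and a section of `x ↦ [x, e₁]` writes `θ(·, e₁)` as a combination of `x₂` and `x_n`
plus a form factoring through `[·, e₁]`, the coboundary part. Conversely the coefficients are
recovered on the pairs `(e₁ - e₂, e₁)`, `(e_n, e₁)`, `(e₁, e₂)`, `(e₂, e₂)`, whose brackets vanish.
-/

/-- Multiplication of the algebra `F_n^1`: `[e_1,e_1] = e_3`,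
`[e_i,e_1] = e_{i+1}` for `2 ≤ i ≤ n-1`, other products zero. -/
def F1mul (n : ℕ) (x y : Fin n → ℂ) : Fin n → ℂ :=
  fun k =>
    if h : (k : ℕ) = 2 then
      (x ⟨0, by have := k.isLt; omega⟩ + x ⟨1, by have := k.isLt; omega⟩) *
        y ⟨0, by have := k.isLt; omega⟩
    else if h2 : 3 ≤ (k : ℕ) then
      x ⟨(k : ℕ) - 1, by have := k.isLt; omega⟩ * y ⟨0, by have := k.isLt; omega⟩
    else 0

namespace F1

variable {n : ℕ}

abbrev e (i : Fin n) : Fin n → ℂ := Pi.single i 1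

lemma F1mul_eq_smul (hn : 0 < n) (x y : Fin n → ℂ) :
    F1mul n x y = y ⟨0, hn⟩ • F1mul n x (e ⟨0, hn⟩) := by
  funext k
  simp only [F1mul, Pi.smul_apply, smul_eq_mul, Pi.single_eq_same]
  split_ifs <;> ring

lemma F1mul_single_of_pos {m : ℕ} (hm0 : 0 < m) (hm : m < n) (x : Fin n → ℂ) :
    F1mul n x (e ⟨m, hm⟩) = 0 := by
  rw [F1mul_eq_smul (by omega)]
  simp [hm0.ne]

lemma F1mul_single_zero_single_zero (hn : 3 ≤ n) :
    F1mul n (e ⟨0, by omega⟩) (e ⟨0, by omega⟩) = e ⟨2, hn⟩ := by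
  funext ⟨k, hk⟩
  simp only [F1mul, Pi.single_apply, Fin.mk.injEq]
  split_ifs <;> first | contradiction | omega | norm_num

lemma F1mul_single_one_single_zero (hn : 3 ≤ n) :
    F1mul n (e ⟨1, by omega⟩) (e ⟨0, by omega⟩) = e ⟨2, hn⟩ := by
  funext ⟨k, hk⟩
  simp only [F1mul, Pi.single_apply, Fin.mk.injEq]
  split_ifs <;> first | contradiction | omega | norm_num

lemma F1mul_single_single_zero {m : ℕ} (hm2 : 2 ≤ m) (hm : m + 1 < n) :
    F1mul n (e ⟨m, by omega⟩) (e ⟨0, by omega⟩) = e ⟨m + 1, hm⟩ := by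
  funext ⟨k, hk⟩
  simp only [F1mul, Pi.single_apply, Fin.mk.injEq]
  split_ifs <;> first | contradiction | omega | norm_num

lemma F1mul_single_last_single_zero (hn : 3 ≤ n) :
    F1mul n (e ⟨n - 1, by omega⟩) (e ⟨0, by omega⟩) = 0 := by
  funext ⟨k, hk⟩
  simp only [F1mul, Pi.single_apply, Fin.mk.injEq]
  split_ifs <;> first | contradiction | omega | norm_num

lemma F1mul_sub_single_zero (hn : 3 ≤ n) :
    F1mul n (e ⟨0, by omega⟩ - e ⟨1, by omega⟩) (e ⟨0, by omega⟩) = 0 := by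
  funext ⟨k, hk⟩
  simp only [F1mul, Pi.sub_apply, Pi.single_apply, Fin.mk.injEq]
  split_ifs <;> first | contradiction | omega | norm_num

/-- A linear section of `x ↦ [x, e₁]` over the derived algebra `{w | w₁ = w₂ = 0}`. -/
noncomputable def shiftDown (hn : 3 ≤ n) : (Fin n → ℂ) →ₗ[ℂ] (Fin n → ℂ) where
  toFun w j :=
    if (j : ℕ) = 0 then w ⟨2, by omega⟩
    else if h : 2 ≤ (j : ℕ) ∧ (j : ℕ) + 1 < n then w ⟨j + 1, h.2⟩ else 0
  map_add' v w := by
    funext j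
    simp only [Pi.add_apply]
    split_ifs <;> simp
  map_smul' a w := by
    funext j
    simp only [Pi.smul_apply, smul_eq_mul, RingHom.id_apply]
    split_ifs <;> simp

lemma F1mul_shiftDown (hn : 3 ≤ n) (w : Fin n → ℂ) (hw0 : w ⟨0, by omega⟩ = 0)
    (hw1 : w ⟨1, by omega⟩ = 0) :
    F1mul n (shiftDown hn w) (e ⟨0, by omega⟩) = w := by
  funext ⟨k, hk⟩
  rcases (by omega : k = 0 ∨ k = 1 ∨ k = 2 ∨ 3 ≤ k) with rfl | rfl | rfl | hk3
  · simp [F1mul, hw0]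
  · simp [F1mul, hw1]
  · simp [F1mul, shiftDown]
  · have : k - 1 + 1 = k := by omega
    simp [F1mul, shiftDown, hk3, this, show k ≠ 2 by omega, show k - 1 ≠ 0 by omega,
      show 2 ≤ k - 1 by omega, hk]

lemma eq_add_shiftDown_F1mul (hn : 3 ≤ n) (x : Fin n → ℂ) :
    x = x ⟨1, by omega⟩ • (e ⟨1, by omega⟩ - e ⟨0, by omega⟩) +
      x ⟨n - 1, by omega⟩ • e ⟨n - 1, by omega⟩ + shiftDown hn (F1mul n x (e ⟨0, by omega⟩)) := by
  funext ⟨k, hk⟩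
  rcases (by omega : k = 0 ∨ k = 1 ∨ (2 ≤ k ∧ k + 1 < n) ∨ k = n - 1) with rfl | rfl | hk2 | rfl
  · simp [F1mul, shiftDown, show n - 1 ≠ 0 by omega]
  · simp [F1mul, shiftDown, show n - 1 ≠ 1 by omega]
  · simp [F1mul, shiftDown, hk2, show k ≠ 0 by omega, show k ≠ 1 by omega,
      show k ≠ n - 1 by omega]
  · simp [F1mul, shiftDown, show n - 1 ≠ 0 by omega, show n - 1 ≠ 1 by omega,
      show ¬n - 1 + 1 < n by omega]

variable {W : Type*} [AddCommGroup W] [Module ℂ W]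

def IsCocycle (θ : (Fin n → ℂ) →ₗ[ℂ] (Fin n → ℂ) →ₗ[ℂ] W) : Prop :=
  ∀ x y z, θ x (F1mul n y z) = θ (F1mul n x y) z - θ (F1mul n x z) y

namespace IsCocycle

variable {θ : (Fin n → ℂ) →ₗ[ℂ] (Fin n → ℂ) →ₗ[ℂ] W}

lemma apply_single_eq_zero (hθ : IsCocycle θ) {m : ℕ} (hm2 : 2 ≤ m) (hm : m < n)
    (x : Fin n → ℂ) : θ x (e ⟨m, hm⟩) = 0 := by
  induction m, hm2 using Nat.le_induction generalizing x with
  | base =>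
    rw [← F1mul_single_zero_single_zero hm, hθ, sub_self]
  | succ m hm2 ih =>
    rw [← F1mul_single_single_zero hm2 hm, hθ, F1mul_single_of_pos (by omega) (by omega), ih,
      map_zero, LinearMap.zero_apply, sub_zero]

lemma apply_eq_zero_of_derived (hθ : IsCocycle θ) (hn : 3 ≤ n) {w : Fin n → ℂ}
    (hw0 : w ⟨0, by omega⟩ = 0) (hw1 : w ⟨1, by omega⟩ = 0) (x : Fin n → ℂ) : θ x w = 0 := by
  rw [← (Pi.basisFun ℂ (Fin n)).sum_repr w, map_sum]
  refine Finset.sum_eq_zero fun ⟨m, hm⟩ _ => ?_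
  rcases (by omega : m = 0 ∨ m = 1 ∨ 2 ≤ m) with rfl | rfl | hm2
  · simp [hw0]
  · simp [hw1]
  · rw [map_smul, Pi.basisFun_apply, hθ.apply_single_eq_zero hm2, smul_zero]

lemma apply_single_one_eq_zero_of_derived (hθ : IsCocycle θ) (hn : 3 ≤ n) {w : Fin n → ℂ}
    (hw0 : w ⟨0, by omega⟩ = 0) (hw1 : w ⟨1, by omega⟩ = 0) : θ w (e ⟨1, by omega⟩) = 0 := by
  have h := hθ (shiftDown hn w) (e ⟨1, by omega⟩) (e ⟨0, by omega⟩)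
  rwa [F1mul_single_one_single_zero hn, hθ.apply_single_eq_zero le_rfl,
    F1mul_single_of_pos one_pos, map_zero, LinearMap.zero_apply, zero_sub,
    F1mul_shiftDown hn w hw0 hw1, zero_eq_neg] at h

lemma apply_eq (hθ : IsCocycle θ) (hn : 3 ≤ n) (x y : Fin n → ℂ) :
    θ x y = y ⟨0, by omega⟩ • θ x (e ⟨0, by omega⟩) +
      (x ⟨0, by omega⟩ * y ⟨1, by omega⟩) • θ (e ⟨0, by omega⟩) (e ⟨1, by omega⟩) +
      (x ⟨1, by omega⟩ * y ⟨1, by omega⟩) • θ (e ⟨1, by omega⟩) (e ⟨1, by omega⟩) := by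
  set e₀ : Fin n → ℂ := e ⟨0, by omega⟩
  set e₁ : Fin n → ℂ := e ⟨1, by omega⟩
  have hy : θ x (y - y ⟨0, by omega⟩ • e₀ - y ⟨1, by omega⟩ • e₁) = 0 :=
    hθ.apply_eq_zero_of_derived hn (by simp [e₀, e₁]) (by simp [e₀, e₁]) x
  have hx : θ (x - x ⟨0, by omega⟩ • e₀ - x ⟨1, by omega⟩ • e₁) e₁ = 0 :=
    hθ.apply_single_one_eq_zero_of_derived hn (by simp [e₀, e₁]) (by simp [e₀, e₁])
  simp only [map_sub, map_smul, LinearMap.sub_apply, LinearMap.smul_apply] at hx hy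
  linear_combination (norm := module) hy + y ⟨1, by omega⟩ • hx

end IsCocycle

/-- `c i` is the coefficient of the paper's cocycle `θ_{i+1}`. -/
def reprCocycle (hn : 3 ≤ n) (c : Fin 4 → W) (x y : Fin n → ℂ) : W :=
  (x ⟨1, by omega⟩ * y ⟨0, by omega⟩) • c 0 + (x ⟨n - 1, by omega⟩ * y ⟨0, by omega⟩) • c 1 +
    (x ⟨0, by omega⟩ * y ⟨1, by omega⟩) • c 2 + (x ⟨1, by omega⟩ * y ⟨1, by omega⟩) • c 3

def reprCoeffs (hn : 3 ≤ n) (θ : (Fin n → ℂ) →ₗ[ℂ] (Fin n → ℂ) →ₗ[ℂ] W) : Fin 4 → W :=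
  ![θ (e ⟨1, by omega⟩) (e ⟨0, by omega⟩) - θ (e ⟨0, by omega⟩) (e ⟨0, by omega⟩),
    θ (e ⟨n - 1, by omega⟩) (e ⟨0, by omega⟩),
    θ (e ⟨0, by omega⟩) (e ⟨1, by omega⟩),
    θ (e ⟨1, by omega⟩) (e ⟨1, by omega⟩)]

lemma IsCocycle.sub_reprCocycle_reprCoeffs {θ : (Fin n → ℂ) →ₗ[ℂ] (Fin n → ℂ) →ₗ[ℂ] W}
    (hθ : IsCocycle θ) (hn : 3 ≤ n) (x y : Fin n → ℂ) :
    θ x y - reprCocycle hn (reprCoeffs hn θ) x y =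
      (θ.flip (e ⟨0, by omega⟩) ∘ₗ shiftDown hn) (F1mul n x y) := by
  have hx := congrArg (θ · (e ⟨0, by omega⟩)) (eq_add_shiftDown_F1mul hn x)
  simp only [map_add, map_smul, map_sub, LinearMap.add_apply, LinearMap.smul_apply,
    LinearMap.sub_apply] at hx
  rw [F1mul_eq_smul (by omega), map_smul, LinearMap.comp_apply, LinearMap.flip_apply,
    hθ.apply_eq hn x y]
  simp only [reprCocycle, reprCoeffs, Matrix.cons_val]
  linear_combination (norm := module) y ⟨0, by omega⟩ • hx

lemma eq_reprCoeffs_of_sub_reprCocycle_eq (hn : 3 ≤ n)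
    {θ : (Fin n → ℂ) →ₗ[ℂ] (Fin n → ℂ) →ₗ[ℂ] W}
    {c : Fin 4 → W} {φ : (Fin n → ℂ) →ₗ[ℂ] W}
    (h : ∀ x y, θ x y - reprCocycle hn c x y = φ (F1mul n x y)) : c = reprCoeffs hn θ := by
  have h0 {x y} (hxy : F1mul n x y = 0) : θ x y = reprCocycle hn c x y := by
    rw [← sub_eq_zero, h, hxy, map_zero]
  have hne₀ : n - 1 ≠ 0 := by omega
  have hne₁ : n - 1 ≠ 1 := by omega
  funext i
  fin_cases i
  · simpa [reprCocycle, reprCoeffs, hne₀, hne₁, neg_eq_iff_eq_neg] using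
      (h0 (F1mul_sub_single_zero hn)).symm
  · simpa [reprCocycle, reprCoeffs, hne₀, hne₁] using
      (h0 (F1mul_single_last_single_zero hn)).symm
  · have h02 := h0 (F1mul_single_of_pos one_pos (by omega) (e ⟨0, by omega⟩))
    simpa [reprCocycle, reprCoeffs, hne₀, hne₁] using h02.symm
  · have h12 := h0 (F1mul_single_of_pos one_pos (by omega) (e ⟨1, by omega⟩))
    simpa [reprCocycle, reprCoeffs, hne₀, hne₁] using h12.symm

end F1

/-- `dim HL^2(F_n^1, V) = 4k`, with cohomology classes represented by the
cocycles `θ_{1,j}(e_2,e_1)=x_j`, `θ_{2,j}(e_n,e_1)=x_j`,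
`θ_{3,j}(e_1,e_2)=x_j`, `θ_{4,j}(e_2,e_2)=x_j`: every central 2-cocycle is
congruent modulo coboundaries to a unique linear combination of these. -/
theorem F1_HL2_dim (n k : ℕ) (hn : 4 ≤ n) :
    ∀ θ : (Fin n → ℂ) →ₗ[ℂ] (Fin n → ℂ) →ₗ[ℂ] (Fin k → ℂ),
      (∀ x y z : Fin n → ℂ,
          θ x (F1mul n y z) = θ (F1mul n x y) z - θ (F1mul n x z) y) →
      ∃! c : Fin 4 → Fin k → ℂ, ∃ φ : (Fin n → ℂ) →ₗ[ℂ] (Fin k → ℂ),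
        ∀ x y : Fin n → ℂ,
          θ x y -
            ((x ⟨1, by omega⟩ * y ⟨0, by omega⟩) • c 0 +
             (x ⟨n - 1, by omega⟩ * y ⟨0, by omega⟩) • c 1 +
             (x ⟨0, by omega⟩ * y ⟨1, by omega⟩) • c 2 +
             (x ⟨1, by omega⟩ * y ⟨1, by omega⟩) • c 3) = φ (F1mul n x y) := by
  intro θ hθ
  have hn₃ : 3 ≤ n := by omega
  exact ⟨F1.reprCoeffs hn₃ θ, ⟨_, F1.IsCocycle.sub_reprCocycle_reprCoeffs hθ hn₃⟩,
    fun c ⟨_, hc⟩ => F1.eq_reprCoeffs_of_sub_reprCocycle_eq hn₃ hc⟩
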